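/- There exists an absolute constant c > 0 such that the following holds. Let k, L be integers with 2 ≤ L < k and L dividing k, let ε ∈ (0,1], and let p be a distribution on [k]. Let f be a uniformly random balanced L-coloring of [k] and let q be the induced distribution on [L] given by q_r = ∑_{i : f(i)=r} p_i. Then: (i) if p = u_k, then q = u_L with probability 1; and (ii) if ∑_{i=1}^k |p_i − 1/k| > ε, then P( ∑_{r=1}^L (q_r − 1/L)² > ε²/(4k) ) ≥ c. -/

import Mathlib

/-!
Put `d = p - u_k`, so that `∑ d = 0`, and `Z f = ∑_r (q_r - 1/L)²`; expanding the square,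
`Z f = ∑_{i,j} d_i d_j [f i = f j]`. The law of a uniform balanced coloring is invariant under
permutations of `[k]`, so the probability that given points receive equal colors depends only on
their equality pattern. With `∑ d = 0` this makes the first two moments of `Z` explicit:
`E Z = (1 - P(f i = f j)) ‖d‖₂² ≥ ‖d‖₂² / 2`, because `P(f i = f j) = (k/L - 1)/(k - 1) ≤ 1/2`,
and `E Z² ≤ 8 ‖d‖₂⁴`. The Paley–Zygmund inequality then gives `P(Z > ‖d‖₂²/4) ≥ 1/128`, and
`‖d‖₂² > ε²/k` by Cauchy–Schwarz.
-/

open scoped BigOperators Classical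

/-- The finite set of balanced `L`-colorings of `[k]`: functions `Fin k → Fin L` each of
whose fibers has exactly `k / L` elements. -/
noncomputable def balancedColorings (k L : ℕ) : Finset (Fin k → Fin L) :=
  Finset.univ.filter fun f =>
    ∀ r : Fin L, (Finset.univ.filter fun i => f i = r).card = k / L

/-- For a coloring `f` and weights `p`, `partSum p f r = ∑_{i : f i = r} p_i`:
the induced distribution on `[L]`. -/
noncomputable def partSum {k L : ℕ} (p : Fin k → ℝ) (f : Fin k → Fin L) (r : Fin L) : ℝ :=
  ∑ i ∈ Finset.univ.filter (fun i => f i = r), p i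

open Finset Function

section QuadraticForm

variable {ι : Type*} [Fintype ι]

def quadForm (d : ι → ℝ) (G : ι → ι → ℝ) : ℝ := ∑ a, ∑ b, d a * d b * G a b

theorem quadForm_eq_of_eq [DecidableEq ι] {d : ι → ℝ} (hd : ∑ a, d a = 0) {G : ι → ι → ℝ}
    (c w : ℝ) (u φ h : ι → ℝ)
    (hG : ∀ a b, G a b = c + u a + u b + w * (φ a * φ b) + if a = b then h a else 0) :
    quadForm d G = w * (∑ a, d a * φ a) ^ 2 + ∑ a, d a ^ 2 * h a := by
  have hsplit : ∀ a b, d a * d b * G a b = d b * (c * d a + d a * u a) + d a * (d b * u b)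
      + w * ((d a * φ a) * (d b * φ b)) + if a = b then d a * d b * h a else 0 := by
    intro a b; rw [hG]; split_ifs <;> ring
  simp only [quadForm, hsplit, sum_add_distrib, ← mul_sum, ← sum_mul, hd, sum_ite_eq, mem_univ,
    if_true]
  simp [sq, mul_sum]

end QuadraticForm

section Colorings

variable {ι α : Type*} [DecidableEq α]

def sameColor (f : ι → α) (i j : ι) : ℝ := if f i = f j then 1 else 0

theorem sameColor_self (f : ι → α) (i : ι) : sameColor f i i = 1 := if_pos rfl

theorem sameColor_comm (f : ι → α) (i j : ι) : sameColor f i j = sameColor f j i := by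
  simp only [sameColor, eq_comm]

theorem sameColor_mul_self (f : ι → α) (i j : ι) :
    sameColor f i j * sameColor f i j = sameColor f i j := by
  unfold sameColor; split_ifs <;> norm_num

theorem sameColor_nonneg (f : ι → α) (i j : ι) : 0 ≤ sameColor f i j := by
  unfold sameColor; split_ifs <;> norm_num

theorem sameColor_le_one (f : ι → α) (i j : ι) : sameColor f i j ≤ 1 := by
  unfold sameColor; split_ifs <;> norm_num

theorem sum_sq_sum_fiber_eq_quadForm [Fintype ι] [Fintype α] (f : ι → α) (d : ι → ℝ) :
    ∑ r, (∑ i with f i = r, d i) ^ 2 = quadForm d (sameColor f) := by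
  calc ∑ r, (∑ i with f i = r, d i) ^ 2
      = ∑ r, ∑ i with f i = r, ∑ j with f j = f i, d i * d j := by
        refine sum_congr rfl fun r _ => ?_
        rw [sq, sum_mul_sum]
        refine sum_congr rfl fun i hi => ?_
        rw [(mem_filter.mp hi).2]
    _ = ∑ i, ∑ j with f j = f i, d i * d j := sum_fiberwise _ _ _
    _ = quadForm d (sameColor f) := by
        simp only [quadForm, sameColor, sum_filter, mul_ite, mul_one, mul_zero, eq_comm]

def pairCount (S : Finset (ι → α)) (i j : ι) : ℝ := ∑ f ∈ S, sameColor f i j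

def quadCount (S : Finset (ι → α)) (i j a b : ι) : ℝ :=
  ∑ f ∈ S, sameColor f i j * sameColor f a b

variable (S : Finset (ι → α))

theorem pairCount_self (i : ι) : pairCount S i i = #S := by
  simp [pairCount, sameColor_self]

theorem quadCount_self_left (i a b : ι) : quadCount S i i a b = pairCount S a b := by
  simp [quadCount, pairCount, sameColor_self]

theorem quadCount_self_right (i j a : ι) : quadCount S i j a a = pairCount S i j := by
  simp [quadCount, pairCount, sameColor_self]

theorem quadCount_same_pair (i j : ι) : quadCount S i j i j = pairCount S i j := by
  simp [quadCount, pairCount, sameColor_mul_self]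

theorem quadCount_comm_left (i j a b : ι) : quadCount S i j a b = quadCount S j i a b := by
  simp only [quadCount, sameColor_comm _ i j]

theorem quadCount_comm_right (i j a b : ι) : quadCount S i j a b = quadCount S i j b a := by
  simp only [quadCount, sameColor_comm _ a b]

variable [Fintype ι] (d : ι → ℝ)

theorem sum_quadForm_sameColor :
    ∑ f ∈ S, quadForm d (sameColor f) = quadForm d (pairCount S) := by
  simp only [quadForm, pairCount, mul_sum]
  rw [sum_comm]
  exact sum_congr rfl fun a _ => sum_comm

theorem sum_quadForm_sameColor_sq :
    ∑ f ∈ S, quadForm d (sameColor f) ^ 2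
      = quadForm d fun i j => quadForm d (quadCount S i j) := by
  have hsq : ∀ f : ι → α, quadForm d (sameColor f) ^ 2
      = ∑ i, ∑ j, ∑ a, ∑ b, d i * d j * (d a * d b * (sameColor f i j * sameColor f a b)) := by
    intro f
    simp only [sq, quadForm, sum_mul, mul_sum]
    exact sum_congr rfl fun _ _ => sum_congr rfl fun _ _ => sum_congr rfl fun _ _ =>
      sum_congr rfl fun _ _ => by ring
  rw [sum_congr rfl fun f _ => hsq f]
  simp only [quadForm, quadCount, mul_sum]
  rw [sum_comm]
  refine sum_congr rfl fun i _ => ?_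
  rw [sum_comm]
  refine sum_congr rfl fun j _ => ?_
  rw [sum_comm]
  exact sum_congr rfl fun a _ => sum_comm

end Colorings

section Invariance

variable {ι α : Type*}

def PermInvariant (S : Finset (ι → α)) : Prop := ∀ σ : Equiv.Perm ι, ∀ f ∈ S, f ∘ σ ∈ S

variable {S : Finset (ι → α)}

theorem PermInvariant.sum_comp_perm (hS : PermInvariant S) (σ : Equiv.Perm ι)
    (F : (ι → α) → ℝ) : ∑ f ∈ S, F (f ∘ σ) = ∑ f ∈ S, F f :=
  sum_nbij' (· ∘ σ) (· ∘ σ.symm) (fun f hf => hS σ f hf) (fun f hf => hS σ.symm f hf)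
    (fun f _ => by ext; simp) (fun f _ => by ext; simp) (fun _ _ => rfl)

theorem PermInvariant.sum_comp_eq_of_injective (hS : PermInvariant S) {t : ℕ}
    {u v : Fin t → ι} (hu : Injective u) (hv : Injective v) (F : (Fin t → α) → ℝ) :
    ∑ f ∈ S, F (f ∘ u) = ∑ f ∈ S, F (f ∘ v) := by
  obtain ⟨σ, hσ⟩ := Equiv.Perm.exists_extending_pair u v hu hv
  have hv : ∀ f : ι → α, f ∘ v = (f ∘ σ) ∘ u := fun f => funext fun x => by simp [hσ]
  simp only [hv]
  exact (hS.sum_comp_perm σ fun f => F (f ∘ u)).symm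

theorem PermInvariant.exists_sum_comp_eq (hS : PermInvariant S) {t : ℕ}
    (F : (Fin t → α) → ℝ) (hF₀ : ∀ g, 0 ≤ F g) (hF₁ : ∀ g, F g ≤ 1) :
    ∃ c : ℝ, 0 ≤ c ∧ c ≤ #S ∧ ∀ u : Fin t → ι, Injective u → ∑ f ∈ S, F (f ∘ u) = c := by
  by_cases h : ∃ u : Fin t → ι, Injective u
  · obtain ⟨u₀, hu₀⟩ := h
    refine ⟨∑ f ∈ S, F (f ∘ u₀), sum_nonneg fun f _ => hF₀ _, ?_,
      fun u hu => hS.sum_comp_eq_of_injective hu hu₀ F⟩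
    simpa using sum_le_sum fun f (_ : f ∈ S) => hF₁ (f ∘ u₀)
  · exact ⟨0, le_rfl, by positivity, fun u hu => (h ⟨u, hu⟩).elim⟩

end Invariance

section CoincidenceCounts

variable {ι α : Type*} [DecidableEq α] {S : Finset (ι → α)} {n₂ n₃ n₄ : ℝ}

structure HasCoincidenceCounts (S : Finset (ι → α)) (n₂ n₃ n₄ : ℝ) : Prop where
  pair : ∀ a b, a ≠ b → pairCount S a b = n₂
  triple : ∀ a b c, a ≠ b → a ≠ c → b ≠ c → quadCount S a b a c = n₃
  quad : ∀ a b c e, a ≠ b → a ≠ c → a ≠ e → b ≠ c → b ≠ e → c ≠ e → quadCount S a b c e = n₄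

theorem PermInvariant.exists_hasCoincidenceCounts (hS : PermInvariant S) :
    ∃ n₂ n₃ n₄ : ℝ, 0 ≤ n₂ ∧ 0 ≤ n₃ ∧ n₃ ≤ #S ∧ 0 ≤ n₄ ∧ n₄ ≤ #S ∧
      HasCoincidenceCounts S n₂ n₃ n₄ := by
  obtain ⟨n₂, hn₂, -, h₂⟩ := hS.exists_sum_comp_eq (fun g : Fin 2 → α => sameColor g 0 1)
    (fun g => sameColor_nonneg g 0 1) (fun g => sameColor_le_one g 0 1)
  obtain ⟨n₃, hn₃, hn₃S, h₃⟩ := hS.exists_sum_comp_eq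
    (fun g : Fin 3 → α => sameColor g 0 1 * sameColor g 0 2)
    (fun g => mul_nonneg (sameColor_nonneg g 0 1) (sameColor_nonneg g 0 2))
    (fun g => mul_le_one₀ (sameColor_le_one g 0 1) (sameColor_nonneg g 0 2)
      (sameColor_le_one g 0 2))
  obtain ⟨n₄, hn₄, hn₄S, h₄⟩ := hS.exists_sum_comp_eq
    (fun g : Fin 4 → α => sameColor g 0 1 * sameColor g 2 3)
    (fun g => mul_nonneg (sameColor_nonneg g 0 1) (sameColor_nonneg g 2 3))
    (fun g => mul_le_one₀ (sameColor_le_one g 0 1) (sameColor_nonneg g 2 3)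
      (sameColor_le_one g 2 3))
  refine ⟨n₂, n₃, n₄, hn₂, hn₃, hn₃S, hn₄, hn₄S, ⟨fun a b hab => h₂ ![a, b] ?_,
    fun a b c hab hac hbc => h₃ ![a, b, c] ?_,
    fun a b c e hab hac hae hbc hbe hce => h₄ ![a, b, c, e] ?_⟩⟩ <;>
  · intro x y hxy
    fin_cases x <;> fin_cases y <;> simp_all [eq_comm]

variable [DecidableEq ι]

theorem pairCount_eq (h₂ : ∀ a b, a ≠ b → pairCount S a b = n₂) (a b : ι) :
    pairCount S a b = n₂ + if a = b then #S - n₂ else 0 := by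
  split_ifs with hab
  · rw [hab, pairCount_self]; ring
  · rw [h₂ a b hab, add_zero]

def pairIndicator (i j x : ι) : ℝ := (if x = i then 1 else 0) + if x = j then 1 else 0

/-- The coefficients are fixed by the values `n₂`, `n₃`, `n₄` on the ten equality patterns of
`(a, b)` relative to `{i, j}`. -/
theorem quadCount_eq (hS : HasCoincidenceCounts S n₂ n₃ n₄) {i j : ι} (hij : i ≠ j) (a b : ι) :
    quadCount S i j a b = n₄ + (n₃ - n₄) * pairIndicator i j a + (n₃ - n₄) * pairIndicator i j b
      + (n₂ - 2 * n₃ + n₄) * (pairIndicator i j a * pairIndicator i j b)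
      + if a = b then (n₂ - n₄) * (1 - pairIndicator i j a) else 0 := by
  have hji := hij.symm
  rcases eq_or_ne a i with rfl | hai
  · rcases eq_or_ne b a with rfl | hba
    · simp [pairIndicator, hij, quadCount_self_right, hS.pair _ _ hij]; ring
    rcases eq_or_ne b j with rfl | hbj
    · simp [pairIndicator, hij, hji, quadCount_same_pair, hS.pair _ _ hij]; ring
    · simp [pairIndicator, hij, hba, hbj, hS.triple _ _ _ hij hba.symm hbj.symm]
  rcases eq_or_ne a j with rfl | haj
  · rw [quadCount_comm_left]
    rcases eq_or_ne b a with rfl | hba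
    · simp [pairIndicator, hji, quadCount_self_right, hS.pair _ _ hji]; ring
    rcases eq_or_ne b i with rfl | hbi
    · simp [pairIndicator, hij, hji, quadCount_same_pair, hS.pair _ _ hji]; ring
    · simp [pairIndicator, hji, hba, hbi, hS.triple _ _ _ hji hba.symm hbi.symm]
  rcases eq_or_ne b i with rfl | hbi
  · rw [quadCount_comm_right]
    simp [pairIndicator, hij, hai, haj, hS.triple _ _ _ hij hai.symm haj.symm]
  rcases eq_or_ne b j with rfl | hbj
  · rw [quadCount_comm_left, quadCount_comm_right]
    simp [pairIndicator, hji, hai, haj, hS.triple _ _ _ hji haj.symm hai.symm]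
  rcases eq_or_ne b a with rfl | hba
  · simp [pairIndicator, hai, haj, quadCount_self_right, hS.pair _ _ hij]
  · simp [pairIndicator, hai, haj, hbi, hbj, hba.symm,
      hS.quad _ _ _ _ hij hai.symm hbi.symm haj.symm hbj.symm hba.symm]

variable [Fintype ι] {d : ι → ℝ}

theorem quadForm_pairCount (h₂ : ∀ a b, a ≠ b → pairCount S a b = n₂) (hd : ∑ a, d a = 0) :
    quadForm d (pairCount S) = (#S - n₂) * ∑ a, d a ^ 2 := by
  rw [quadForm_eq_of_eq hd n₂ 0 0 0 (fun _ => #S - n₂) fun a b => by simp [pairCount_eq h₂ a b]]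
  simp [mul_comm, sum_mul]

theorem quadForm_quadCount (hS : HasCoincidenceCounts S n₂ n₃ n₄) (hd : ∑ a, d a = 0) {i j : ι}
    (hij : i ≠ j) :
    quadForm d (quadCount S i j)
      = (n₂ - 2 * n₃ + n₄) * (d i + d j) ^ 2 + (n₂ - n₄) * (∑ a, d a ^ 2 - d i ^ 2 - d j ^ 2) := by
  rw [quadForm_eq_of_eq hd n₄ (n₂ - 2 * n₃ + n₄) (fun a => (n₃ - n₄) * pairIndicator i j a)
    (pairIndicator i j) (fun a => (n₂ - n₄) * (1 - pairIndicator i j a)) (quadCount_eq hS hij)]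
  simp [pairIndicator, mul_add, mul_sub, sum_add_distrib, sum_sub_distrib, ← sum_mul]
  ring

theorem sum_quadForm_sameColor_sq_eq (hS : HasCoincidenceCounts S n₂ n₃ n₄)
    (hd : ∑ a, d a = 0) :
    ∑ f ∈ S, quadForm d (sameColor f) ^ 2
      = (#S - 4 * n₃ + 3 * n₄) * (∑ a, d a ^ 2) ^ 2
        + (8 * n₃ - 2 * n₂ - 6 * n₄) * ∑ a, d a ^ 4 := by
  generalize hD : ∑ a, d a ^ 2 = D
  rw [sum_quadForm_sameColor_sq, quadForm_eq_of_eq hd ((n₂ - n₄) * D) (2 * (n₂ - 2 * n₃ + n₄))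
    (fun i => 2 * (n₄ - n₃) * d i ^ 2) d
    (fun i => (#S - 2 * n₂ + n₄) * D - (2 * n₂ - 8 * n₃ + 6 * n₄) * d i ^ 2)]
  · have hdiag : ∀ a, d a ^ 2 * ((#S - 2 * n₂ + n₄) * D - (2 * n₂ - 8 * n₃ + 6 * n₄) * d a ^ 2)
        = (#S - 2 * n₂ + n₄) * D * d a ^ 2 - (2 * n₂ - 8 * n₃ + 6 * n₄) * d a ^ 4 := by
      intro a; ring
    simp only [hdiag, sum_sub_distrib, ← mul_sum, ← sq, hD]
    ring
  · intro i j
    split_ifs with hij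
    · subst hij
      rw [funext₂ (quadCount_self_left S i), quadForm_pairCount hS.pair hd, hD]
      ring
    · rw [quadForm_quadCount hS hd hij, hD]
      ring

theorem PermInvariant.sum_quadForm_sameColor_sq_le (hS : PermInvariant S) (hd : ∑ a, d a = 0) :
    ∑ f ∈ S, quadForm d (sameColor f) ^ 2 ≤ 8 * #S * (∑ a, d a ^ 2) ^ 2 := by
  obtain ⟨n₂, n₃, n₄, hn₂, hn₃, hn₃S, hn₄, hn₄S, hc⟩ := hS.exists_hasCoincidenceCounts
  rw [sum_quadForm_sameColor_sq_eq hc hd]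
  have hp₄ : ∑ a, d a ^ 4 ≤ (∑ a, d a ^ 2) ^ 2 := by
    simpa [← pow_mul] using sum_sq_le_sq_sum_of_nonneg fun a _ => sq_nonneg (d a)
  have hp₄' : 0 ≤ ∑ a, d a ^ 4 := sum_nonneg fun a _ => by positivity
  nlinarith [mul_nonneg hn₄ hp₄', mul_nonneg hn₂ hp₄', mul_nonneg hn₃ (sub_nonneg.2 hp₄),
    mul_nonneg (sub_nonneg.2 hn₄S) (sq_nonneg (∑ a, d a ^ 2)),
    mul_nonneg (sub_nonneg.2 hn₃S) (sq_nonneg (∑ a, d a ^ 2))]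

end CoincidenceCounts

/-- The Paley–Zygmund inequality for the counting measure on `S`. -/
theorem sq_sum_sub_le_card_filter_mul_sum_sq {β : Type*} (S : Finset β) (X : β → ℝ) {t : ℝ}
    (ht : 0 ≤ t) (hX : t * #S ≤ ∑ f ∈ S, X f) :
    (∑ f ∈ S, X f - t * #S) ^ 2 ≤ #(S.filter fun f => t < X f) * ∑ f ∈ S, X f ^ 2 := by
  set A := S.filter fun f => t < X f
  have hlow : ∑ f ∈ S with ¬t < X f, X f ≤ t * #S :=
    calc ∑ f ∈ S with ¬t < X f, X f ≤ ∑ f ∈ S with ¬t < X f, t :=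
          sum_le_sum fun f hf => not_lt.1 (mem_filter.1 hf).2
      _ ≤ t * #S := by
          rw [sum_const, nsmul_eq_mul, mul_comm]
          exact mul_le_mul_of_nonneg_left (by exact_mod_cast card_filter_le _ _) ht
  have hsplit := sum_filter_add_sum_filter_not S (fun f => t < X f) X
  calc (∑ f ∈ S, X f - t * #S) ^ 2 ≤ (∑ f ∈ A, X f) ^ 2 :=
        pow_le_pow_left₀ (sub_nonneg.2 hX) (by linarith) 2
    _ ≤ #A * ∑ f ∈ A, X f ^ 2 := sq_sum_le_card_mul_sum_sq
    _ ≤ #A * ∑ f ∈ S, X f ^ 2 :=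
        mul_le_mul_of_nonneg_left
          (sum_le_sum_of_subset_of_nonneg (filter_subset _ _) fun f _ _ => sq_nonneg (X f))
          (Nat.cast_nonneg _)

theorem sq_lt_card_mul_sum_sq {ι : Type*} [Fintype ι] {d : ι → ℝ} {ε : ℝ} (hε : 0 ≤ ε)
    (h : ε < ∑ i, |d i|) : ε ^ 2 < Fintype.card ι * ∑ i, d i ^ 2 :=
  calc ε ^ 2 < (∑ i, |d i|) ^ 2 := pow_lt_pow_left₀ h hε two_ne_zero
    _ ≤ Fintype.card ι * ∑ i, |d i| ^ 2 := by
        simpa using sq_sum_le_card_mul_sum_sq (s := univ) (f := fun i => |d i|)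
    _ = Fintype.card ι * ∑ i, d i ^ 2 := by simp

section Balanced

variable {k L : ℕ}

theorem permInvariant_balancedColorings : PermInvariant (balancedColorings k L) := by
  intro σ f hf
  simp only [balancedColorings, mem_filter, mem_univ, true_and, comp_apply] at hf ⊢
  intro r
  rw [← hf r]
  exact card_equiv σ fun i => by simp

theorem balancedColorings_nonempty (hL : 0 < L) (hdvd : L ∣ k) :
    (balancedColorings k L).Nonempty := by
  obtain ⟨m, rfl⟩ := hdvd
  refine ⟨fun i => (finProdFinEquiv.symm i).1, ?_⟩
  simp only [balancedColorings, mem_filter, mem_univ, true_and, Nat.mul_div_cancel_left m hL]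
  intro r
  rw [card_equiv finProdFinEquiv.symm (t := univ.filter fun x : Fin L × Fin m => x.1 = r)
    fun i => by simp]
  have hfiber : (univ.filter fun x : Fin L × Fin m => x.1 = r) = {r} ×ˢ univ := by
    ext ⟨a, b⟩; simp [eq_comm]
  simp [hfiber]

theorem sum_sameColor_of_mem_balancedColorings {f : Fin k → Fin L}
    (hf : f ∈ balancedColorings k L) (i : Fin k) : ∑ j, sameColor f i j = ((k / L : ℕ) : ℝ) := by
  simp only [balancedColorings, mem_filter, mem_univ, true_and] at hf
  simp only [sameColor, sum_boole, eq_comm (a := f i), hf]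

/-- Counting same-colored pairs through a fixed point gives `(k - 1) n₂ = N (k / L - 1)`. -/
theorem two_mul_le_card_of_pairCount (hL : 2 ≤ L) (hdvd : L ∣ k) (hk : 0 < k) {n₂ : ℝ}
    (h₂ : ∀ a b, a ≠ b → pairCount (balancedColorings k L) a b = n₂) :
    2 * n₂ ≤ #(balancedColorings k L) := by
  set S := balancedColorings k L
  obtain ⟨m, rfl⟩ := hdvd
  set i : Fin (L * m) := ⟨0, hk⟩
  have hrow : ∑ b, pairCount S i b = #S * m := by
    simp only [pairCount]
    rw [sum_comm, sum_congr rfl fun f hf => sum_sameColor_of_mem_balancedColorings hf i]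
    simp [S, Nat.mul_div_cancel_left m (by omega : 0 < L)]
  have hrow' : ∑ b, pairCount S i b = (L * m - 1) * n₂ + #S := by
    simp [pairCount_eq h₂, sum_add_distrib]
    ring
  have hm : (2 : ℝ) * m ≤ L * m := by gcongr; exact_mod_cast hL
  have hLm : (1 : ℝ) < L * m := by
    have hm : 0 < m := Nat.pos_of_mul_pos_left hk
    exact_mod_cast (by nlinarith : 1 < L * m)
  have hN : (0 : ℝ) ≤ #S := Nat.cast_nonneg _
  nlinarith

theorem half_le_sum_quadForm_sameColor (hL : 2 ≤ L) (hdvd : L ∣ k) (hk : 0 < k) {d : Fin k → ℝ}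
    (hd : ∑ a, d a = 0) :
    #(balancedColorings k L) * (∑ a, d a ^ 2) / 2
      ≤ ∑ f ∈ balancedColorings k L, quadForm d (sameColor f) := by
  obtain ⟨n₂, _, _, -, -, -, -, -, hc⟩ := permInvariant_balancedColorings.exists_hasCoincidenceCounts
  rw [sum_quadForm_sameColor, quadForm_pairCount hc.pair hd]
  have := two_mul_le_card_of_pairCount hL hdvd hk hc.pair
  have hD : 0 ≤ ∑ a, d a ^ 2 := sum_nonneg fun a _ => sq_nonneg (d a)
  nlinarith

theorem partSum_sub_eq (hk : 0 < k) (hdvd : L ∣ k) {f : Fin k → Fin L}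
    (hf : f ∈ balancedColorings k L) (p : Fin k → ℝ) (r : Fin L) :
    partSum p f r - 1 / L = ∑ i with f i = r, (p i - 1 / k) := by
  simp only [balancedColorings, mem_filter, mem_univ, true_and] at hf
  have hL : (L : ℝ) ≠ 0 := by exact_mod_cast (Nat.pos_of_dvd_of_pos hdvd hk).ne'
  rw [sum_sub_distrib, sum_const, hf r, nsmul_eq_mul, Nat.cast_div hdvd hL, partSum]
  field_simp

theorem one_div_le_card_filter_lt_quadForm (hL : 2 ≤ L) (hdvd : L ∣ k) (hk : 0 < k)
    {d : Fin k → ℝ} (hd : ∑ a, d a = 0) {t : ℝ} (ht₀ : 0 ≤ t) (ht : 4 * t < ∑ a, d a ^ 2) :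
    1 / 128 ≤ (#((balancedColorings k L).filter fun f => t < quadForm d (sameColor f)) : ℝ)
      / #(balancedColorings k L) := by
  set S := balancedColorings k L
  set X : (Fin k → Fin L) → ℝ := fun f => quadForm d (sameColor f)
  set D := ∑ a, d a ^ 2
  have hN : (0 : ℝ) < #S := by
    exact_mod_cast (balancedColorings_nonempty (by omega) hdvd).card_pos
  have hfirst : #S * D / 2 ≤ ∑ f ∈ S, X f := half_le_sum_quadForm_sameColor hL hdvd hk hd
  have hsecond : ∑ f ∈ S, X f ^ 2 ≤ 8 * #S * D ^ 2 :=
    permInvariant_balancedColorings.sum_quadForm_sameColor_sq_le hd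
  have hgap : #S * D / 4 ≤ ∑ f ∈ S, X f - t * #S := by nlinarith
  have key : (#S * D / 4) ^ 2 ≤ #(S.filter fun f => t < X f) * (8 * #S * D ^ 2) :=
    calc (#S * D / 4) ^ 2 ≤ (∑ f ∈ S, X f - t * #S) ^ 2 :=
          pow_le_pow_left₀ (by positivity) hgap 2
      _ ≤ #(S.filter fun f => t < X f) * ∑ f ∈ S, X f ^ 2 :=
          sq_sum_sub_le_card_filter_mul_sum_sq S X ht₀ (by nlinarith)
      _ ≤ #(S.filter fun f => t < X f) * (8 * #S * D ^ 2) :=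
          mul_le_mul_of_nonneg_left hsecond (Nat.cast_nonneg _)
  rw [le_div_iff₀ hN]
  have hD : 0 < D := by linarith
  refine le_of_mul_le_mul_right ?_ (by positivity : (0 : ℝ) < 8 * #S * D ^ 2)
  linarith

end Balanced

/-- There is an absolute constant `c > 0` such that for all `2 ≤ L < k` with `L ∣ k`,
`ε ∈ (0,1]`, and every distribution `p` on `[k]`, with `q` the distribution on `[L]` induced
by a uniformly random balanced `L`-coloring:
(i) if `p` is uniform then `q` is uniform for every balanced coloring, and
(ii) if `∑ |p_i − 1/k| > ε` then `∑_r (q_r − 1/L)² > ε²/(4k)` with probability at least `c`. -/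
theorem random_flattening_preserves_distance :
    ∃ c : ℝ, 0 < c ∧
      ∀ (k L : ℕ) (ε : ℝ), 2 ≤ L → L < k → L ∣ k → 0 < ε → ε ≤ 1 →
        ∀ p : Fin k → ℝ, (∀ i, 0 ≤ p i) → (∑ i, p i = 1) →
          ((∀ i, p i = 1 / k) →
            ∀ f ∈ balancedColorings k L, ∀ r : Fin L, partSum p f r = 1 / L)
          ∧ ((∑ i, |p i - 1 / k|) > ε →
              c ≤ (((balancedColorings k L).filter fun f =>
                      (∑ r, (partSum p f r - 1 / L) ^ 2) > ε ^ 2 / (4 * k)).card : ℝ)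
                  / ((balancedColorings k L).card : ℝ)) := by
  refine ⟨1 / 128, by norm_num, fun k L ε hL hLk hdvd hε _ p _ hp => ⟨?_, fun hfar => ?_⟩⟩
  all_goals have hk : 0 < k := by omega
  · intro hunif f hf r
    simpa [hunif, sub_eq_zero] using partSum_sub_eq hk hdvd hf p r
  set d : Fin k → ℝ := fun i => p i - 1 / k
  have hkR : (0 : ℝ) < k := by exact_mod_cast hk
  have hd : ∑ i, d i = 0 := by simp [d, sum_sub_distrib, hp, hkR.ne']
  have hD := sq_lt_card_mul_sum_sq (d := d) hε.le hfar
  rw [Fintype.card_fin] at hD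
  have ht : 4 * (ε ^ 2 / (4 * k)) < ∑ i, d i ^ 2 := by
    rwa [mul_div_assoc', mul_div_mul_left _ _ four_ne_zero, div_lt_iff₀' hkR]
  have hX : ∀ f ∈ balancedColorings k L,
      ∑ r, (partSum p f r - 1 / L) ^ 2 = quadForm d (sameColor f) := fun f hf => by
    simp only [partSum_sub_eq hk hdvd hf]
    exact sum_sq_sum_fiber_eq_quadForm f d
  rw [filter_congr fun f hf => by rw [hX f hf, gt_iff_lt]]
  exact one_div_le_card_filter_lt_quadForm hL hdvd hk hd (by positivity) ht
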